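/- arXiv:math/0503570 — 7 statements merged into one kernel-verified Lean document; each statement's English description precedes it below -/
import Mathlib

section
/- Let q = 2^m with m odd, and let b ∈ F_q^* with Tr(b) = 0. Then there exists a unique c ∈ F_q^* with Tr(c) = 0 such that c^σ + c = b, where σ = 2^k and gcd(k,m) = 1. -/
/-!
The map `x ↦ x ^ 2 ^ k + x` is additive with kernel `{0, 1}`: an element fixed by the `k`-th and
the `m`-th powers of Frobenius is fixed by its `gcd k m`-th power, i.e. by Frobenius itself. Its
image lies in the kernel of the Frobenius-invariant trace, and counting (kernel of order 2,
trace onto `𝔽₂`) shows the two coincide. Hence the solutions of `c ^ 2 ^ k + c = b` form a coset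
`{c₀, c₀ + 1}`; since `Tr 1 = m = 1` in `𝔽₂`, exactly one of them has trace zero, and it is
non-zero because `b` is.
-/

theorem pow_pow_gcd_eq_self {M : Type*} [Monoid M] {x : M} {p k m : ℕ}
    (hk : x ^ p ^ k = x) (hm : x ^ p ^ m = x) : x ^ p ^ k.gcd m = x := by
  have periodic_iff (n : ℕ) : Function.IsPeriodicPt (· ^ p) n x ↔ x ^ p ^ n = x := by
    rw [Function.IsPeriodicPt, Function.IsFixedPt, pow_iterate]
  exact (periodic_iff _).1 (((periodic_iff k).2 hk).gcd ((periodic_iff m).2 hm))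

@[to_additive]
theorem MonoidHom.range_eq_ker_of_card_ker_le {G K : Type*} [Group G] [Group K] [Finite G]
    (f : G →* G) (g : G →* K) (hfg : f.range ≤ g.ker)
    (hcard : Nat.card f.ker ≤ Nat.card g.range) : f.range = g.ker := by
  have hf := f.ker.card_mul_index
  have hg := g.ker.card_mul_index
  rw [Subgroup.index_ker] at hf hg
  have : Finite g.range := .of_surjective _ g.rangeRestrict_surjective
  refine Subgroup.eq_of_le_of_card_ge hfg
    (Nat.le_of_mul_le_mul_right ?_ (Nat.card_pos (α := g.range)))
  calc Nat.card g.ker * Nat.card g.range = Nat.card f.ker * Nat.card f.range := hg.trans hf.symm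
    _ ≤ Nat.card g.range * Nat.card f.range := Nat.mul_le_mul_right _ hcard
    _ = Nat.card f.range * Nat.card g.range := Nat.mul_comm _ _

theorem FiniteField.trace_pow_card_pow {K R : Type*} [Field K] [Fintype K] [CommRing R]
    [Algebra K R] (p : ℕ) [ExpChar R p] [PerfectRing R p] (x : R) (n : ℕ) :
    Algebra.trace K R (x ^ Fintype.card K ^ n) = Algebra.trace K R x := by
  induction n with
  | zero => rw [pow_zero, pow_one]
  | succ n ih =>
    rw [pow_succ, pow_mul, ← frobeniusAlgEquiv_apply K R p, Algebra.trace_eq_of_algEquiv, ih]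

section FiniteFieldCharTwo

variable {F : Type*} [Field F] [Fintype F] {m k : ℕ}

theorem pow_two_pow_add_self_eq_zero_iff [CharP F 2] (hcard : Fintype.card F = 2 ^ m)
    (hgcd : k.gcd m = 1) {x : F} : x ^ 2 ^ k + x = 0 ↔ x = 0 ∨ x = 1 := by
  rw [CharTwo.add_eq_zero]
  constructor
  · intro hx
    have hx2 := pow_pow_gcd_eq_self hx (hcard ▸ FiniteField.pow_card x : x ^ 2 ^ m = x)
    rw [hgcd, pow_one] at hx2
    rwa [← IsIdempotentElem.iff_eq_zero_or_one, IsIdempotentElem, ← sq]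
  · rintro (rfl | rfl) <;> simp

theorem eq_or_eq_add_one_of_pow_two_pow_add_self_eq [CharP F 2]
    (hcard : Fintype.card F = 2 ^ m) (hgcd : k.gcd m = 1) {x y : F}
    (h : x ^ 2 ^ k + x = y ^ 2 ^ k + y) : x = y ∨ x = y + 1 := by
  have hsum : (x + y) ^ 2 ^ k + (x + y) = 0 := by
    rw [add_pow_char_pow, add_add_add_comm, h, CharTwo.add_self_eq_zero]
  rcases (pow_two_pow_add_self_eq_zero_iff hcard hgcd).1 hsum with h | h
  · exact .inl (CharTwo.add_eq_zero.1 h)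
  · exact .inr (by rw [← h, add_comm x, ← add_assoc, CharTwo.add_self_eq_zero, zero_add])

variable [Algebra (ZMod 2) F]

theorem exists_pow_two_pow_add_self_eq (hcard : Fintype.card F = 2 ^ m) (hgcd : k.gcd m = 1)
    {b : F} (hb : Algebra.trace (ZMod 2) F b = 0) : ∃ c : F, c ^ 2 ^ k + c = b := by
  have : CharP F 2 := charP_of_injective_algebraMap' (ZMod 2) 2
  let L : F →+ F := (iterateFrobenius F 2 k : F →+ F) + AddMonoidHom.id F
  let Tr : F →+ ZMod 2 := (Algebra.trace (ZMod 2) F).toAddMonoidHom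
  have hLTr : L.range ≤ Tr.ker := by
    rintro _ ⟨x, rfl⟩
    have := FiniteField.trace_pow_card_pow (K := ZMod 2) 2 x k
    rw [ZMod.card] at this
    change Algebra.trace (ZMod 2) F (x ^ 2 ^ k + x) = 0
    rw [map_add, this, CharTwo.add_self_eq_zero]
  have hcard_ker : Nat.card L.ker ≤ Nat.card Tr.range := by
    have hker : (L.ker : Set F) ⊆ {0, 1} := fun x hx =>
      (pow_two_pow_add_self_eq_zero_iff hcard hgcd).1 hx
    calc Nat.card L.ker = (L.ker : Set F).ncard := Nat.card_coe_set_eq _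
      _ ≤ ({0, 1} : Set F).ncard := Set.ncard_le_ncard hker
      _ = 2 := Set.ncard_pair zero_ne_one
      _ = Nat.card Tr.range := by
        rw [AddMonoidHom.range_eq_top.2 (Algebra.trace_surjective _ _), AddSubgroup.card_top,
          Nat.card_zmod]
  obtain ⟨c, hc⟩ : b ∈ L.range := (L.range_eq_ker_of_card_ker_le Tr hLTr hcard_ker) ▸ hb
  exact ⟨c, hc⟩

theorem trace_one_eq_one_of_odd (hcard : Fintype.card F = 2 ^ m) (hm : Odd m) :
    Algebra.trace (ZMod 2) F 1 = 1 := by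
  have hfinrank : Module.finrank (ZMod 2) F = m := by
    have h := Module.card_eq_pow_finrank (K := ZMod 2) (V := F)
    rw [ZMod.card, hcard] at h
    exact (Nat.pow_right_injective le_rfl h).symm
  rw [← map_one (algebraMap (ZMod 2) F), Algebra.trace_algebraMap, hfinrank, nsmul_one]
  exact hm.natCast_zmod_two

end FiniteFieldCharTwo

theorem unique_trace_zero_solution_general (m k : ℕ) (hm : Odd m)
    (hgcd : Nat.gcd k m = 1)
    (F : Type*) [Field F] [Fintype F] [Algebra (ZMod 2) F] (hcard : Fintype.card F = 2 ^ m)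
    (b : F) (hb0 : b ≠ 0) (hbt : Algebra.trace (ZMod 2) F b = 0) :
    ∃! c : F, c ≠ 0 ∧ Algebra.trace (ZMod 2) F c = 0 ∧ c ^ (2 ^ k) + c = b := by
  have : CharP F 2 := charP_of_injective_algebraMap' (ZMod 2) 2
  have htr1 := trace_one_eq_one_of_odd (F := F) hcard hm
  obtain ⟨c₀, hc₀⟩ := exists_pow_two_pow_add_self_eq hcard hgcd hbt
  obtain ⟨c, hcb, hct⟩ : ∃ c : F, c ^ 2 ^ k + c = b ∧ Algebra.trace (ZMod 2) F c = 0 := by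
    rcases (by decide : ∀ r : ZMod 2, r = 0 ∨ r = 1) (Algebra.trace (ZMod 2) F c₀) with h | h
    · exact ⟨c₀, hc₀, h⟩
    · refine ⟨c₀ + 1, ?_, by rw [map_add, h, htr1, CharTwo.add_self_eq_zero]⟩
      rw [add_pow_char_pow, one_pow, add_add_add_comm, CharTwo.add_self_eq_zero, add_zero, hc₀]
  refine ⟨c, ⟨?_, hct, hcb⟩, fun y ⟨_, hyt, hyb⟩ => ?_⟩
  · rintro rfl
    exact hb0 (by simpa using hcb.symm)
  · rcases eq_or_eq_add_one_of_pow_two_pow_add_self_eq hcard hgcd (hyb.trans hcb.symm) with h | h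
    · exact h
    · rw [h, map_add, hct, htr1] at hyt
      exact absurd hyt one_ne_zero

/-- For `q = 2^m` with `m` odd, `b ∈ F_q^*` with `Tr(b) = 0`, `σ = 2^k` with
`gcd(k,m) = 1`, there is a unique `c ∈ F_q^*` with `Tr(c) = 0` and `c^σ + c = b`. -/
theorem unique_trace_zero_solution (m k : ℕ) (hm : Odd m)
    (hk1 : 1 ≤ k) (hk2 : k ≤ m - 1) (hgcd : Nat.gcd k m = 1)
    (F : Type*) [Field F] [Fintype F] [Algebra (ZMod 2) F] (hcard : Fintype.card F = 2 ^ m)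
    (b : F) (hb0 : b ≠ 0) (hbt : Algebra.trace (ZMod 2) F b = 0) :
    ∃! c : F, c ≠ 0 ∧ Algebra.trace (ZMod 2) F c = 0 ∧ c ^ (2 ^ k) + c = b :=
  unique_trace_zero_solution_general m k hm hgcd F hcard b hb0 hbt
end

section
/- Let q = 2^m with m ≥ 2. The set T₀* = {x ∈ F_q^* : Tr(x) = 0} is a (q-1, q/2 - 1, q/4 - 1) difference set in the multiplicative group F_q^*; that is, |T₀*| = q/2 - 1 and for every g ∈ F_q^* with g ≠ 1, the number of ordered pairs (x,y) ∈ T₀* × T₀* with x = g y equals q/4 - 1. -/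
/-!
For `K`-linearly independent `a₁, …, a_k` in a finite separable extension `L / K`, nondegeneracy
of the trace form makes `x ↦ (Tr (aᵢ x))ᵢ` a surjection onto `K^k`, so its kernel has
`|L| / |K|^k` elements. The pairs `(g y, y)` in `T₀* × T₀*` are the nonzero `y` in the kernel
for `(a₁, a₂) = (1, g)`, and `1, g` are independent over `𝔽₂` exactly when `g ∉ {0, 1}`.
-/

namespace Algebra

variable (K : Type*) {L : Type*} [Field K] [Field L] [Algebra K L] {ι : Type*}

noncomputable def traceMulMap (a : ι → L) : L →ₗ[K] ι → K :=
  LinearMap.pi fun i => (trace K L).comp (LinearMap.mulLeft K (a i))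

@[simp]
lemma traceMulMap_apply (a : ι → L) (x : L) (i : ι) : traceMulMap K a x i = trace K L (a i * x) :=
  rfl

variable {K}

theorem traceMulMap_surjective [FiniteDimensional K L] [Algebra.IsSeparable K L] [Finite ι]
    {a : ι → L} (ha : LinearIndependent K a) : Function.Surjective (traceMulMap K a) := by
  classical
  have := Fintype.ofFinite ι
  rw [← LinearMap.dualMap_injective_iff, injective_iff_map_eq_zero]
  intro φ hφ
  -- `φ` is `v ↦ ∑ vᵢ cᵢ`, so `φ ∘ traceMulMap` is the trace form against `∑ cᵢ aᵢ`.
  set c : ι → K := fun i => φ fun j => if i = j then 1 else 0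
  have hφc : ∀ x, φ (traceMulMap K a x) = trace K L ((∑ i, c i • a i) * x) := fun x => by
    rw [LinearMap.pi_apply_eq_sum_univ φ, Finset.sum_mul, map_sum]
    refine Finset.sum_congr rfl fun i _ => ?_
    rw [traceMulMap_apply, smul_mul_assoc, map_smul, smul_eq_mul, smul_eq_mul, mul_comm]
  have hsum : ∑ i, c i • a i = 0 :=
    (traceForm_nondegenerate K L).1 _ fun x => by
      rw [traceForm_apply, ← hφc]; exact LinearMap.congr_fun hφ x
  have hc : ∀ i, c i = 0 := Fintype.linearIndependent_iff.1 ha c hsum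
  refine LinearMap.ext fun v => ?_
  simp only [LinearMap.pi_apply_eq_sum_univ φ v, LinearMap.zero_apply]
  exact Finset.sum_eq_zero fun i _ => (congrArg (v i • ·) (hc i)).trans (smul_zero _)

theorem card_setOf_ne_zero_forall_trace_mul_eq_zero [Finite L] [Algebra.IsSeparable K L]
    [Finite ι] {a : ι → L} (ha : LinearIndependent K a) :
    Nat.card {x : L | x ≠ 0 ∧ ∀ i, trace K L (a i * x) = 0} =
      Nat.card L / Nat.card K ^ Nat.card ι - 1 := by
  set f := traceMulMap K a
  have hcard : Nat.card L = Nat.card (LinearMap.ker f) * Nat.card K ^ Nat.card ι := by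
    rw [(LinearMap.ker f).card_eq_card_quotient_mul_card, ← Nat.card_fun,
      Nat.card_congr (f.quotKerEquivOfSurjective (traceMulMap_surjective ha)).toEquiv]
  have hset : {x : L | x ≠ 0 ∧ ∀ i, trace K L (a i * x) = 0} = (LinearMap.ker f : Set L) \ {0} := by
    ext x
    simp [f, funext_iff, and_comm]
  rw [Nat.card_coe_set_eq, hset, Set.ncard_sdiff_singleton_of_mem (LinearMap.ker f).zero_mem,
    ← Nat.card_coe_set_eq, SetLike.coe_sort_coe, Nat.div_eq_of_eq_mul_left _ hcard]
  exact Nat.pos_of_ne_zero fun h => (Nat.card_pos (α := L)).ne' (by simpa [h] using hcard)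

end Algebra

theorem linearIndependent_one_pair_iff {K L : Type*} [Field K] [Field L] [Algebra K L] {g : L} :
    LinearIndependent K ![1, g] ↔ g ∉ Set.range (algebraMap K L) := by
  simp [LinearIndependent.pair_iff' one_ne_zero, Algebra.algebraMap_eq_smul_one]

theorem Nat.card_setOf_fst_eq_apply_snd {α β : Type*} (P : α → Prop) (Q : β → Prop) (f : β → α) :
    Nat.card {p : α × β | P p.1 ∧ Q p.2 ∧ p.1 = f p.2} = Nat.card {y | P (f y) ∧ Q y} := by
  have : {p : α × β | P p.1 ∧ Q p.2 ∧ p.1 = f p.2} = (fun y => (f y, y)) '' {y | P (f y) ∧ Q y} := by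
    ext p
    constructor
    · rintro ⟨hx, hy, h⟩
      exact ⟨p.2, ⟨h ▸ hx, hy⟩, Prod.ext h.symm rfl⟩
    · rintro ⟨y, hy, rfl⟩
      exact ⟨hy.1, hy.2, rfl⟩
  rw [this, Nat.card_image_of_injective fun y₁ y₂ h => (Prod.ext_iff.1 h).2]

theorem trace_zero_units_difference_set_general (m : ℕ)
    (F : Type*) [Field F] [Fintype F] [Algebra (ZMod 2) F] (hcard : Fintype.card F = 2 ^ m) :
    Nat.card {x : F | x ≠ 0 ∧ Algebra.trace (ZMod 2) F x = 0} = 2 ^ m / 2 - 1 ∧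
    ∀ g : F, g ≠ 0 → g ≠ 1 →
      Nat.card {p : F × F |
          (p.1 ≠ 0 ∧ Algebra.trace (ZMod 2) F p.1 = 0) ∧
          (p.2 ≠ 0 ∧ Algebra.trace (ZMod 2) F p.2 = 0) ∧ p.1 = g * p.2} =
        2 ^ m / 4 - 1 := by
  constructor
  · have h := Algebra.card_setOf_ne_zero_forall_trace_mul_eq_zero (K := ZMod 2)
      (LinearIndependent.of_subsingleton (v := fun _ : Unit => (1 : F)) () one_ne_zero)
    simpa [hcard] using h
  · intro g hg0 hg1
    have hg : g ∉ Set.range (algebraMap (ZMod 2) F) := by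
      rintro ⟨c, rfl⟩
      fin_cases c
      exacts [hg0 (map_zero _), hg1 (map_one _)]
    have h := Algebra.card_setOf_ne_zero_forall_trace_mul_eq_zero
      (linearIndependent_one_pair_iff.2 hg)
    refine (Nat.card_setOf_fst_eq_apply_snd (fun x => x ≠ 0 ∧ Algebra.trace (ZMod 2) F x = 0)
      (fun x => x ≠ 0 ∧ Algebra.trace (ZMod 2) F x = 0) (g * ·)).trans ?_
    convert h using 3
    · ext y
      simp only [Set.mem_ofPred_eq, Fin.forall_fin_two, Matrix.cons_val_zero, Matrix.cons_val_one,
        one_mul, mul_ne_zero_iff]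
      tauto
    · simp [hcard]
    · simp

/-- For `q = 2^m`, `m ≥ 2`, the set `T₀* = {x ∈ F_q^* : Tr(x) = 0}` is a
`(q-1, q/2-1, q/4-1)` difference set in the multiplicative group `F_q^*`. -/
theorem trace_zero_units_difference_set (m : ℕ) (hm : 2 ≤ m)
    (F : Type*) [Field F] [Fintype F] [Algebra (ZMod 2) F] (hcard : Fintype.card F = 2 ^ m) :
    Nat.card {x : F | x ≠ 0 ∧ Algebra.trace (ZMod 2) F x = 0} = 2 ^ m / 2 - 1 ∧
    ∀ g : F, g ≠ 0 → g ≠ 1 →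
      Nat.card {p : F × F |
          (p.1 ≠ 0 ∧ Algebra.trace (ZMod 2) F p.1 = 0) ∧
          (p.2 ≠ 0 ∧ Algebra.trace (ZMod 2) F p.2 = 0) ∧ p.1 = g * p.2} =
        2 ^ m / 4 - 1 :=
  trace_zero_units_difference_set_general m F hcard
end

section
/- Let q = 2^m with m ≥ 2 and let β ∈ F_q with β ∉ {0,1}. Then |β² T₀* ∩ T₀*| = q/4 - 1, where T₀* = {x ∈ F_q^* : Tr(x) = 0}. -/
/-!
Put `c = β⁻²`. An element `y` lies in `β²T₀* ∩ T₀*` exactly when `y ≠ 0` and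
`Tr y = Tr (c y) = 0`, i.e. `y` is a nonzero element of the kernel of
`φ : y ↦ (Tr y, Tr (c y)) : F_q → F_2²`. Since `β ∉ {0, 1}`, the elements `1, c` are
linearly independent over `F_2`, and nondegeneracy of the trace form makes `φ` surjective:
a linear form `(a, b)` killing its image gives `Tr ((a + b c) y) = 0` for all `y`, so
`a + b c = 0`. Hence `|ker φ| = q / 4`.
-/

theorem LinearMap.card_ker_mul_card_of_surjective {R M N : Type*} [Ring R] [AddCommGroup M]
    [AddCommGroup N] [Module R M] [Module R N] {f : M →ₗ[R] N} (hf : Function.Surjective f) :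
    Nat.card (LinearMap.ker f) * Nat.card N = Nat.card M := by
  have := AddSubgroup.card_mul_index (LinearMap.ker f).toAddSubgroup
  rwa [LinearMap.ker_toAddSubgroup, AddSubgroup.index_ker, AddMonoidHom.range_eq_top.2 hf,
    AddSubgroup.card_top] at this

theorem Set.image_mul_left_eq_preimage₀ {G₀ : Type*} [GroupWithZero G₀] {a : G₀}
    (ha : a ≠ 0) (s : Set G₀) : (fun x => a * x) '' s = (fun x => a⁻¹ * x) ⁻¹' s := by
  ext y
  constructor
  · rintro ⟨x, hx, rfl⟩
    simpa [ha] using hx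
  · exact fun hy => ⟨_, hy, mul_inv_cancel_left₀ ha y⟩

theorem trace_mul_pi_surjective {K L ι : Type*} [Field K] [Field L] [Algebra K L]
    [FiniteDimensional K L] [Algebra.IsSeparable K L] [Fintype ι] {c : ι → L}
    (hc : LinearIndependent K c) :
    Function.Surjective
      (LinearMap.pi fun i => Algebra.trace K L ∘ₗ LinearMap.mulLeft K (c i)) := by
  classical
  set φ := LinearMap.pi fun i => Algebra.trace K L ∘ₗ LinearMap.mulLeft K (c i)
  rw [← LinearMap.range_eq_top]
  by_contra hne
  obtain ⟨f, hf0, hf⟩ :=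
    Submodule.exists_dual_map_eq_bot_of_lt_top (lt_top_iff_ne_top.2 hne) inferInstance
  set e : ι → ι → K := fun i j => if i = j then 1 else 0
  have hann : ∀ y, Algebra.traceForm K L (∑ i, f (e i) • c i) y = 0 := by
    intro y
    have hfy : f (φ y) = 0 := by
      rw [← Submodule.mem_bot K, ← hf]
      exact Submodule.mem_map_of_mem (LinearMap.mem_range_self _ y)
    rw [LinearMap.pi_apply_eq_sum_univ] at hfy
    simpa [φ, Algebra.traceForm_apply, Finset.sum_mul, smul_mul_assoc, mul_comm] using hfy
  have hfe : ∀ i, f (e i) = 0 :=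
    Fintype.linearIndependent_iff.1 hc _ ((traceForm_nondegenerate K L).1 _ hann)
  refine hf0 (LinearMap.ext fun x => ?_)
  rw [LinearMap.pi_apply_eq_sum_univ f x]
  exact Finset.sum_eq_zero fun i _ => (congrArg (x i • ·) (hfe i)).trans (smul_zero _)

theorem linearIndependent_one_of_ne_zero_of_ne_one {L : Type*} [Ring L] [Nontrivial L]
    [Algebra (ZMod 2) L] {c : L} (h0 : c ≠ 0) (h1 : c ≠ 1) :
    LinearIndependent (ZMod 2) ![1, c] := by
  rw [LinearIndependent.pair_iff' one_ne_zero]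
  intro a
  obtain rfl | rfl : a = 0 ∨ a = 1 := by decide +revert
  · simpa using h0.symm
  · simpa using h1.symm

theorem inv_sq_ne_one_of_ne_one {F : Type*} [Field F] [CharP F 2] {β : F} (h : β ≠ 1) :
    (β ^ 2)⁻¹ ≠ 1 := by
  rw [inv_ne_one, ← one_pow 2]
  exact CharTwo.sq_injective.ne h

theorem card_beta_sq_T0_inter_T0_general (m : ℕ)
    (F : Type*) [Field F] [Fintype F] [Algebra (ZMod 2) F] (hcard : Fintype.card F = 2 ^ m)
    (β : F) (hβ0 : β ≠ 0) (hβ1 : β ≠ 1) :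
    Nat.card (((fun x => β ^ 2 * x) '' {x : F | x ≠ 0 ∧ Algebra.trace (ZMod 2) F x = 0}) ∩
        {x : F | x ≠ 0 ∧ Algebra.trace (ZMod 2) F x = 0} : Set F) = 2 ^ m / 4 - 1 := by
  have : CharP F 2 := charP_of_injective_algebraMap' (ZMod 2) 2
  have hβsq : β ^ 2 ≠ 0 := pow_ne_zero 2 hβ0
  set φ := LinearMap.pi fun i =>
    Algebra.trace (ZMod 2) F ∘ₗ LinearMap.mulLeft (ZMod 2) (![1, (β ^ 2)⁻¹] i)
  have hφ : Function.Surjective φ := trace_mul_pi_surjective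
    (linearIndependent_one_of_ne_zero_of_ne_one (inv_ne_zero hβsq) (inv_sq_ne_one_of_ne_one hβ1))
  have hset : (fun x => β ^ 2 * x) '' {x : F | x ≠ 0 ∧ Algebra.trace (ZMod 2) F x = 0} ∩
      {x : F | x ≠ 0 ∧ Algebra.trace (ZMod 2) F x = 0} = (LinearMap.ker φ : Set F) \ {0} := by
    rw [Set.image_mul_left_eq_preimage₀ hβsq]
    ext y
    simp only [Set.mem_inter_iff, Set.mem_preimage, Set.mem_ofPred_eq, Set.mem_sdiff,
      SetLike.mem_coe, LinearMap.mem_ker, Set.mem_singleton_iff, funext_iff, Fin.forall_fin_two,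
      φ, LinearMap.pi_apply, LinearMap.comp_apply, LinearMap.mulLeft_apply, Pi.zero_apply,
      Matrix.cons_val_zero, Matrix.cons_val_one, one_mul, ne_eq, mul_eq_zero, inv_eq_zero, hβsq,
      false_or]
    tauto
  have hker : Nat.card (LinearMap.ker φ) * 4 = 2 ^ m := by
    rw [← hcard, ← Nat.card_eq_fintype_card, ← LinearMap.card_ker_mul_card_of_surjective hφ]
    simp
  rw [hset, Nat.card_coe_set_eq, Set.ncard_sdiff_singleton_of_mem (Submodule.zero_mem _),
    ← Nat.card_coe_set_eq]
  change Nat.card (LinearMap.ker φ) - 1 = _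
  omega

/-- For `q = 2^m`, `m ≥ 2`, and `β ∉ {0,1}`, one has `|β²T₀* ∩ T₀*| = q/4 - 1`. -/
theorem card_beta_sq_T0_inter_T0 (m : ℕ) (hm : 2 ≤ m)
    (F : Type*) [Field F] [Fintype F] [Algebra (ZMod 2) F] (hcard : Fintype.card F = 2 ^ m)
    (β : F) (hβ0 : β ≠ 0) (hβ1 : β ≠ 1) :
    Nat.card (((fun x => β ^ 2 * x) '' {x : F | x ≠ 0 ∧ Algebra.trace (ZMod 2) F x = 0}) ∩
        {x : F | x ≠ 0 ∧ Algebra.trace (ZMod 2) F x = 0} : Set F) = 2 ^ m / 4 - 1 :=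
  card_beta_sq_T0_inter_T0_general m F hcard β hβ0 hβ1
end

section
/- Let q = 2^m, gcd(k,m) = 1, σ = 2^k, kr ≡ 1 (mod m), and f(x) = Σ_{i=0}^{r-1} x^{σ^i}. Then for all x ∈ F_q^*, f(x)^{σ+1}/x² = f(x) + f(x)/x + f(x)²/x². -/
/-- The map `f(x) = Σ_{i=0}^{r-1} x^{σ^i}` with `σ = 2^k`, so `x^{σ^i} = x^{2^{k·i}}`. -/
def fσ {F : Type*} [Field F] (k r : ℕ) (x : F) : F :=
  ∑ i ∈ Finset.range r, x ^ 2 ^ (k * i)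

/-- With `q = 2^m`, `gcd(k,m) = 1`, `σ = 2^k`, `kr ≡ 1 (mod m)`: for all `x ∈ F_q^*`,
`f(x)^{σ+1}/x² = f(x) + f(x)/x + f(x)²/x²`. -/
theorem H00_expansion (m k r : ℕ) (hm : 1 ≤ m) (hgcd : Nat.gcd k m = 1)
    (hr1 : 1 ≤ r) (hr2 : r ≤ m - 1) (hkr : k * r ≡ 1 [MOD m])
    (F : Type*) [Field F] [Fintype F] (hcard : Fintype.card F = 2 ^ m) :
    ∀ x : F, x ≠ 0 →
      fσ k r x ^ (2 ^ k + 1) / x ^ 2 =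
        fσ k r x + fσ k r x / x + fσ k r x ^ 2 / x ^ 2 := by
  -- characteristic 2
  have hm2 : 2 ≤ m := by omega
  haveI : Fact (Nat.Prime 2) := ⟨Nat.prime_two⟩
  have hchar : CharP F 2 := by
    have hp : (ringChar F).Prime := CharP.char_is_prime F (ringChar F)
    have hdvd : 2 ∣ ringChar F := by
      rw [prime_dvd_char_iff_dvd_card 2, hcard]
      exact dvd_pow_self 2 (by omega)
    have : ringChar F = 2 := ((Nat.prime_dvd_prime_iff_eq Nat.prime_two hp).mp hdvd).symm
    rw [← this]
    exact ringChar.charP F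
  haveI := hchar
  have h2 : (2 : F) = 0 := by exact_mod_cast CharP.cast_eq_zero F 2
  -- kr = m*t + 1
  have hk1 : 1 ≤ k := by
    rcases Nat.eq_zero_or_pos k with h | h
    · subst h; simp at hgcd; omega
    · exact h
  obtain ⟨t, ht⟩ : ∃ t, k * r = m * t + 1 := by
    have h1 : 1 ≤ k * r := Nat.one_le_iff_ne_zero.mpr (by positivity)
    have := (Nat.modEq_iff_dvd' h1).mp hkr.symm
    obtain ⟨t, ht⟩ := this
    exact ⟨t, by omega⟩
  intro x hx
  -- x ^ 2^(kr) = x^2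
  have hpow : x ^ 2 ^ (k * r) = x ^ 2 := by
    rw [ht]
    clear ht hkr
    induction t with
    | zero => simp [pow_succ]
    | succ n ih =>
      have : m * (n + 1) + 1 = (m * n + 1) + m := by ring
      rw [this, pow_add, pow_mul, ← hcard]
      rw [FiniteField.pow_card]
      exact ih
  -- Frobenius of f
  have hfrob : fσ k r x ^ 2 ^ k + x = fσ k r x + x ^ 2 := by
    have : fσ k r x ^ 2 ^ k = ∑ i ∈ Finset.range r, x ^ 2 ^ (k * (i + 1)) := by
      rw [fσ, sum_pow_char_pow]
      congr 1; ext i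
      rw [← pow_mul, ← pow_add]
      ring_nf
    rw [this]
    have hshift : ∑ i ∈ Finset.range (r + 1), x ^ 2 ^ (k * i)
        = (∑ i ∈ Finset.range r, x ^ 2 ^ (k * (i + 1))) + x ^ 2 ^ (k * 0) :=
      Finset.sum_range_succ' _ r
    have hsucc : ∑ i ∈ Finset.range (r + 1), x ^ 2 ^ (k * i)
        = (∑ i ∈ Finset.range r, x ^ 2 ^ (k * i)) + x ^ 2 ^ (k * r) :=
      Finset.sum_range_succ _ r
    simp only [Nat.mul_zero, pow_zero, pow_one] at hshift
    rw [hsucc, hpow] at hshift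
    rw [fσ]
    linear_combination -hshift
  have key : fσ k r x ^ 2 ^ k = fσ k r x + x + x ^ 2 := by
    linear_combination hfrob - x * h2
  rw [pow_succ, key]
  field_simp
  ring
end

section
/- Let q = 2^m, gcd(k,m) = 1, σ = 2^k, kr ≡ 1 (mod m), and H₀₀(x) = f(x)^{σ+1}/x² for x ∈ F_q^* (H₀₀(0) = 0), where f(x) = Σ_{i=0}^{r-1} x^{σ^i}. Then H₀₀ maps T₀ = {x : Tr(x) = 0} bijectively onto T₀, and maps T₁ = {x : Tr(x) = 1} bijectively onto T_{r mod 2} (i.e., onto T₀ if r is even and onto T₁ if r is odd). -/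
/-- `H₀₀(x) = f(x)^{σ+1}/x²` (with `H₀₀(0) = 0`, as `f(0) = 0` and division by zero is
zero in Lean). -/
def H00 {F : Type*} [Field F] (k r : ℕ) (x : F) : F :=
  fσ k r x ^ (2 ^ k + 1) / x ^ 2

namespace H00Aux

lemma card_range_mul_card_ker {G H : Type*} [AddGroup G] [AddGroup H] (f : G →+ H) :
    Nat.card G = Nat.card f.range * Nat.card f.ker := by
  rw [AddSubgroup.card_eq_card_quotient_mul_card_addSubgroup f.ker]
  congr 1
  exact Nat.card_congr (QuotientAddGroup.quotientKerEquivRange f).toEquiv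

section Field

variable {F : Type*} [Field F] [CharP F 2]

lemma h2 : (2 : F) = 0 := CharTwo.two_eq_zero

lemma add_eq_zero_iff2 {a b : F} : a + b = 0 ↔ a = b := by
  constructor
  · intro h; linear_combination h - b * (h2 (F := F))
  · intro h; rw [h, CharTwo.add_self_eq_zero]

lemma frob_add (x y : F) (n : ℕ) : (x + y) ^ 2 ^ n = x ^ 2 ^ n + y ^ 2 ^ n :=
  add_pow_char_pow x y 2 n

lemma fσ_zero (k r : ℕ) : fσ k r (0 : F) = 0 := by
  unfold fσ
  apply Finset.sum_eq_zero
  intro i _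
  exact zero_pow (by positivity)

lemma fσ_frob (k r n : ℕ) (x : F) : (fσ k r x) ^ 2 ^ n = fσ k r (x ^ 2 ^ n) := by
  unfold fσ
  rw [sum_pow_char_pow]
  exact Finset.sum_congr rfl fun i _ => by rw [← pow_mul, ← pow_mul, mul_comm]

lemma fσ_add (k r : ℕ) (x y : F) : fσ k r (x + y) = fσ k r x + fσ k r y := by
  unfold fσ
  rw [← Finset.sum_add_distrib]
  exact Finset.sum_congr rfl fun i _ => frob_add x y (k * i)

lemma fσ_one (k r : ℕ) : fσ k r (1 : F) = (r : F) := by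
  unfold fσ; simp

variable [Fintype F]

lemma pow_card_mul (m t : ℕ) (hcard : Fintype.card F = 2 ^ m) (x : F) :
    x ^ 2 ^ (m * t) = x := by
  induction t with
  | zero => simp
  | succ t ih =>
    have h : m * (t + 1) = m * t + m := by ring
    rw [h, pow_add, pow_mul, ih, ← hcard, FiniteField.pow_card]

lemma kr_pow (m t k r : ℕ) (ht : k * r = m * t + 1)
    (hcard : Fintype.card F = 2 ^ m) (x : F) : x ^ 2 ^ (k * r) = x ^ 2 := by
  rw [ht, pow_add, pow_mul, pow_card_mul m t hcard, pow_one]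

lemma sq_of_frob_fixed (m t k r : ℕ) (ht : k * r = m * t + 1)
    (hcard : Fintype.card F = 2 ^ m) (u : F) (h : u ^ 2 ^ k = u) : u = 0 ∨ u = 1 := by
  have hi : ∀ i, u ^ 2 ^ (k * i) = u := by
    intro i
    induction i with
    | zero => simp
    | succ i ih =>
      have hh : k * (i + 1) = k * i + k := by ring
      rw [hh, pow_add, pow_mul, ih, h]
  have hu2 : u ^ 2 = u := by rw [← kr_pow m t k r ht hcard, hi r]
  have : u * (u - 1) = 0 := by linear_combination hu2
  rcases mul_eq_zero.mp this with h' | h'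
  · exact Or.inl h'
  · exact Or.inr (by linear_combination h')

lemma fσ_key (m t k r : ℕ) (ht : k * r = m * t + 1) (hcard : Fintype.card F = 2 ^ m)
    (x : F) : fσ k r x ^ 2 ^ k + fσ k r x = x ^ 2 + x := by
  have h1 : (fσ k r x) ^ 2 ^ k = ∑ i ∈ Finset.range r, x ^ 2 ^ (k * (i + 1)) := by
    rw [fσ_frob]
    unfold fσ
    exact Finset.sum_congr rfl fun i _ => by
      rw [← pow_mul, ← pow_add]
      congr 1
      ring_nf
  have tele := Finset.sum_range_sub (fun i => x ^ 2 ^ (k * i)) r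
  simp only [CharTwo.sub_eq_add] at tele
  rw [h1]
  unfold fσ
  rw [← Finset.sum_add_distrib, tele, kr_pow m t k r ht hcard]
  simp

lemma fσ_AS (m t k r : ℕ) (ht : k * r = m * t + 1) (hcard : Fintype.card F = 2 ^ m)
    (v : F) : fσ k r (v ^ 2 ^ k + v) = v ^ 2 + v := by
  rw [fσ_add, ← fσ_frob]
  exact fσ_key m t k r ht hcard v

lemma H00_zero (k r : ℕ) : H00 k r (0 : F) = 0 := by
  unfold H00
  rw [fσ_zero, zero_pow (by positivity), zero_div]

lemma H00_eq (m t k r : ℕ) (ht : k * r = m * t + 1) (hcard : Fintype.card F = 2 ^ m)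
    (x : F) (hx : x ≠ 0) :
    H00 k r x = (fσ k r x / x) ^ 2 + fσ k r x / x + fσ k r x := by
  have hk := fσ_key m t k r ht hcard x
  unfold H00
  rw [pow_succ]
  have hfk : fσ k r x ^ 2 ^ k = x ^ 2 + x + fσ k r x := by
    linear_combination hk - fσ k r x * (h2 (F := F))
  rw [hfk]
  field_simp
  ring

end Field

section Traces

variable {F : Type*} [Field F] [Fintype F] [Algebra (ZMod 2) F]

lemma tr_sq (x : F) :
    Algebra.trace (ZMod 2) F (x ^ 2) = Algebra.trace (ZMod 2) F x := by
  haveI : CharP F 2 := charP_of_injective_algebraMap (algebraMap (ZMod 2) F).injective 2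
  have hcomm : ∀ c : ZMod 2, c ^ 2 = c := by decide
  let fr : F →ₐ[ZMod 2] F :=
    { toFun := fun y => y ^ 2
      map_one' := one_pow 2
      map_mul' := fun a b => mul_pow a b 2
      map_zero' := zero_pow (by norm_num)
      map_add' := fun a b => add_pow_char a b 2
      commutes' := fun c => by
        show (algebraMap (ZMod 2) F c) ^ 2 = algebraMap (ZMod 2) F c
        rw [← map_pow, hcomm] }
  have hbij : Function.Bijective fr :=
    (Finite.injective_iff_bijective).mp fr.toRingHom.injective
  let e : F ≃ₐ[ZMod 2] F := AlgEquiv.ofBijective fr hbij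
  have he : e x = x ^ 2 := rfl
  rw [← he, Algebra.trace_eq_of_algEquiv e x]

lemma tr_pow2 (x : F) (n : ℕ) :
    Algebra.trace (ZMod 2) F (x ^ 2 ^ n) = Algebra.trace (ZMod 2) F x := by
  induction n with
  | zero => simp
  | succ n ih => rw [pow_succ, pow_mul, tr_sq, ih]

lemma tr_fσ (k r : ℕ) (x : F) :
    Algebra.trace (ZMod 2) F (fσ k r x) = (r : ZMod 2) * Algebra.trace (ZMod 2) F x := by
  unfold fσ
  rw [map_sum]
  have : ∀ i ∈ Finset.range r,
      Algebra.trace (ZMod 2) F (x ^ 2 ^ (k * i)) = Algebra.trace (ZMod 2) F x :=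
    fun i _ => tr_pow2 x (k * i)
  rw [Finset.sum_congr rfl this, Finset.sum_const, Finset.card_range, nsmul_eq_mul]

lemma tr_H00 (m t k r : ℕ) (ht : k * r = m * t + 1) (hcard : Fintype.card F = 2 ^ m)
    (x : F) :
    Algebra.trace (ZMod 2) F (H00 k r x)
      = (r : ZMod 2) * Algebra.trace (ZMod 2) F x := by
  haveI : CharP F 2 := charP_of_injective_algebraMap (algebraMap (ZMod 2) F).injective 2
  rcases eq_or_ne x 0 with rfl | hx
  · rw [H00_zero, map_zero]; ring

  · rw [H00_eq m t k r ht hcard x hx, map_add, map_add, tr_sq, tr_fσ]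
    have : Algebra.trace (ZMod 2) F (fσ k r x / x)
        + Algebra.trace (ZMod 2) F (fσ k r x / x) = 0 := by
      have : ∀ a : ZMod 2, a + a = 0 := by decide
      apply this
    rw [add_assoc] at *
    linear_combination this

lemma T0_card :
    ({x : F | Algebra.trace (ZMod 2) F x = 0}).ncard * 2 = Fintype.card F := by
  classical
  set f := (Algebra.trace (ZMod 2) F).toAddMonoidHom with hf
  have hsurj : Function.Surjective f := Algebra.trace_surjective _ _
  have hrange : f.range = ⊤ := AddMonoidHom.range_eq_top.mpr hsurj
  have h1 : Nat.card F = Nat.card f.range * Nat.card f.ker := card_range_mul_card_ker f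
  have hr2 : Nat.card f.range = 2 := by
    rw [hrange, Nat.card_congr AddSubgroup.topEquiv.toEquiv, Nat.card_eq_fintype_card]
    rfl
  have h4 : Nat.card f.ker = ({x : F | Algebra.trace (ZMod 2) F x = 0}).ncard := by
    rw [← Nat.card_coe_set_eq]
    apply Nat.card_congr
    apply Equiv.setCongr
    ext x; simp [hf, AddMonoidHom.mem_ker]
  rw [hr2, h4, Nat.card_eq_fintype_card] at h1
  omega

lemma T1_card :
    ({x : F | Algebra.trace (ZMod 2) F x = 1}).ncard
      = ({x : F | Algebra.trace (ZMod 2) F x = 0}).ncard := by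
  haveI : CharP F 2 := charP_of_injective_algebraMap (algebraMap (ZMod 2) F).injective 2
  obtain ⟨c, hc⟩ := Algebra.trace_surjective (ZMod 2) F 1
  have himg : (fun x => x + c) '' {x : F | Algebra.trace (ZMod 2) F x = 0}
      = {x : F | Algebra.trace (ZMod 2) F x = 1} := by
    ext y
    simp only [Set.mem_image, Set.mem_setOf_eq]
    constructor
    · rintro ⟨x, hx, rfl⟩
      rw [map_add, hx, hc, zero_add]
    · intro hy
      refine ⟨y + c, ?_, by rw [add_assoc, CharTwo.add_self_eq_zero, add_zero]⟩
      rw [map_add, hy, hc]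
      decide
  rw [← himg, Set.ncard_image_of_injective _ (add_left_injective c)]

lemma AS_surj (m t k r : ℕ) (ht : k * r = m * t + 1) (hcard : Fintype.card F = 2 ^ m)
    (x : F) (hx : Algebra.trace (ZMod 2) F x = 0) : ∃ v : F, v ^ 2 ^ k + v = x := by
  classical
  haveI : CharP F 2 := charP_of_injective_algebraMap (algebraMap (ZMod 2) F).injective 2
  set ψ : F →+ F :=
    { toFun := fun v => v ^ 2 ^ k + v
      map_zero' := by
        show (0 : F) ^ 2 ^ k + 0 = 0
        rw [zero_pow (by positivity), add_zero]
      map_add' := fun a b => by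
        show (a + b) ^ 2 ^ k + (a + b) = (a ^ 2 ^ k + a) + (b ^ 2 ^ k + b)
        rw [frob_add]; ring } with hψ
  have hker : (ψ.ker : Set F) = {0, 1} := by
    ext v
    simp only [SetLike.mem_coe, AddMonoidHom.mem_ker, hψ, AddMonoidHom.coe_mk,
      ZeroHom.coe_mk, Set.mem_insert_iff, Set.mem_singleton_iff]
    constructor
    · intro h
      exact sq_of_frob_fixed m t k r ht hcard v (add_eq_zero_iff2.mp h)
    · rintro (rfl | rfl) <;> simp [CharTwo.add_self_eq_zero]
  have hkcard : Nat.card ψ.ker = 2 := by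
    have hn : ((ψ.ker : Set F)).ncard = 2 := by rw [hker]; exact Set.ncard_pair zero_ne_one
    rw [← Nat.card_coe_set_eq] at hn
    exact hn
  have h1 : Nat.card F = Nat.card ψ.range * 2 := by
    rw [← hkcard]; exact card_range_mul_card_ker ψ
  have hsub : (ψ.range : Set F) ⊆ {y : F | Algebra.trace (ZMod 2) F y = 0} := by
    rintro y ⟨v, rfl⟩
    show Algebra.trace (ZMod 2) F (v ^ 2 ^ k + v) = 0
    rw [map_add, tr_pow2]
    have : ∀ a : ZMod 2, a + a = 0 := by decide
    apply this
  have hT0 := T0_card (F := F)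
  have hrc : (ψ.range : Set F).ncard = ({x : F | Algebra.trace (ZMod 2) F x = 0}).ncard := by
    have hnc : Nat.card ψ.range = (ψ.range : Set F).ncard := Nat.card_coe_set_eq _
    rw [Nat.card_eq_fintype_card, hnc] at h1
    omega
  have heqs := Set.eq_of_subset_of_ncard_le hsub (le_of_eq hrc.symm) (Set.toFinite _)
  have hx' : x ∈ (ψ.range : Set F) := by rw [heqs]; exact hx
  obtain ⟨v, hv⟩ := hx'
  exact ⟨v, hv⟩

end Traces

section Phi

variable {F : Type*} [Field F] [CharP F 2]

/-- `φ(v) = (v^{σ+1} + v)/(v^σ + v)`. -/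
def φf (k : ℕ) (v : F) : F := (v ^ 2 ^ k * v + v) / (v ^ 2 ^ k + v)

variable [Fintype F]

lemma H00_AS (m t k r : ℕ) (ht : k * r = m * t + 1) (hcard : Fintype.card F = 2 ^ m)
    (v : F) (hw : v ^ 2 ^ k + v ≠ 0) :
    H00 k r (v ^ 2 ^ k + v) = (φf k v) ^ 2 + φf k v := by
  rw [H00_eq m t k r ht hcard _ hw, fσ_AS m t k r ht hcard]
  set D := v ^ 2 ^ k + v with hD
  set a := (v ^ 2 + v) / D with haDef
  set b := φf k v with hbDef
  have ha : a * D = v ^ 2 + v := div_mul_cancel₀ _ hw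
  have hb : b * D = v ^ 2 ^ k * v + v := div_mul_cancel₀ _ hw
  have key : (a ^ 2 + a + (v ^ 2 + v)) * D ^ 2 = (b ^ 2 + b) * D ^ 2 := by
    linear_combination (a * D + (v ^ 2 + v) + D) * ha - (b * D + (v ^ 2 ^ k * v + v) + D) * hb
      + (v ^ 4 + 2 * v ^ 3 + v ^ 2 ^ k * v ^ 3) * (h2 (F := F))
  exact mul_right_cancel₀ (pow_ne_zero 2 hw) key

lemma phi_add_one (k : ℕ) (v : F) (hw : v ^ 2 ^ k + v ≠ 0) :
    φf k (v + 1) = φf k v + 1 := by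
  have hd : (v + 1) ^ 2 ^ k + (v + 1) = v ^ 2 ^ k + v := by
    rw [frob_add, one_pow]; linear_combination (h2 (F := F))
  unfold φf
  rw [hd, frob_add, one_pow, div_add_one hw]
  have hnum : (v ^ 2 ^ k + 1) * (v + 1) + (v + 1) = v ^ 2 ^ k * v + v + (v ^ 2 ^ k + v) := by
    linear_combination (h2 (F := F))
  rw [hnum]

lemma phi_inj (m t k r : ℕ) (ht : k * r = m * t + 1) (hcard : Fintype.card F = 2 ^ m)
    (v₁ v₂ : F) (hw₁ : v₁ ^ 2 ^ k + v₁ ≠ 0) (hw₂ : v₂ ^ 2 ^ k + v₂ ≠ 0)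
    (hphi : φf k v₁ = φf k v₂) : v₁ = v₂ := by
  have hv₁0 : v₁ ≠ 0 := by
    rintro rfl; exact hw₁ (by rw [zero_pow (by positivity), add_zero])
  have hv₂0 : v₂ ≠ 0 := by
    rintro rfl; exact hw₂ (by rw [zero_pow (by positivity), add_zero])
  have hv₁1 : v₁ ≠ 1 := by
    rintro rfl; exact hw₁ (by rw [one_pow, CharTwo.add_self_eq_zero])
  have hv₂1 : v₂ ≠ 1 := by
    rintro rfl; exact hw₂ (by rw [one_pow, CharTwo.add_self_eq_zero])
  have hv₁p : v₁ + 1 ≠ 0 := fun h => hv₁1 (add_eq_zero_iff2.mp h)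
  have hv₂p : v₂ + 1 ≠ 0 := fun h => hv₂1 (add_eq_zero_iff2.mp h)
  have hA₁0 : v₁ ^ 2 ^ k ≠ 0 := pow_ne_zero _ hv₁0
  have hA₂0 : v₂ ^ 2 ^ k ≠ 0 := pow_ne_zero _ hv₂0
  have hA₁1 : v₁ ^ 2 ^ k + 1 ≠ 0 := by
    have h : (v₁ + 1) ^ 2 ^ k = v₁ ^ 2 ^ k + 1 := by rw [frob_add, one_pow]
    rw [← h]; exact pow_ne_zero _ hv₁p
  have hA₂1 : v₂ ^ 2 ^ k + 1 ≠ 0 := by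
    have h : (v₂ + 1) ^ 2 ^ k = v₂ ^ 2 ^ k + 1 := by rw [frob_add, one_pow]
    rw [← h]; exact pow_ne_zero _ hv₂p
  unfold φf at hphi
  rw [div_eq_div_iff hw₁ hw₂] at hphi
  set u := (v₁ * (v₂ + 1)) / (v₂ * (v₁ + 1)) with hu
  have hu0 : u ≠ 0 := div_ne_zero (mul_ne_zero hv₁0 hv₂p) (mul_ne_zero hv₂0 hv₁p)
  have huσ : u ^ 2 ^ k = u := by
    rw [hu, div_pow, mul_pow, mul_pow, frob_add, frob_add, one_pow,
      div_eq_div_iff (mul_ne_zero hA₂0 hA₁1) (mul_ne_zero hv₂0 hv₁p)]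
    linear_combination (-1 : F) * hphi
      + (v₁ * v₂ * (v₁ ^ 2 ^ k - v₂ ^ 2 ^ k)) * (h2 (F := F))
  rcases sq_of_frob_fixed m t k r ht hcard u huσ with h | h
  · exact absurd h hu0
  · have hnum : v₁ * (v₂ + 1) = v₂ * (v₁ + 1) :=
      (div_eq_one_iff_eq (mul_ne_zero hv₂0 hv₁p)).mp h
    linear_combination hnum

end Phi

end H00Aux
/-- With `q = 2^m`, `gcd(k,m) = 1`, `σ = 2^k`, `kr ≡ 1 (mod m)`: `H₀₀` maps `T₀`
bijectively onto `T₀`, and maps `T₁` bijectively onto `T₀` if `r` is even and onto `T₁`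
if `r` is odd. -/
theorem H00_bijections (m k r : ℕ) (hm : 1 ≤ m) (hgcd : Nat.gcd k m = 1)
    (hr1 : 1 ≤ r) (hr2 : r ≤ m - 1) (hkr : k * r ≡ 1 [MOD m])
    (F : Type*) [Field F] [Fintype F] [Algebra (ZMod 2) F] (hcard : Fintype.card F = 2 ^ m) :
    Set.BijOn (H00 k r) {x : F | Algebra.trace (ZMod 2) F x = 0}
      {x : F | Algebra.trace (ZMod 2) F x = 0} ∧
    Set.BijOn (H00 k r) {x : F | Algebra.trace (ZMod 2) F x = 1}
      (if r % 2 = 0 then {x : F | Algebra.trace (ZMod 2) F x = 0}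
       else {x : F | Algebra.trace (ZMod 2) F x = 1}) := by
  classical
  haveI hch : CharP F 2 :=
    charP_of_injective_algebraMap (algebraMap (ZMod 2) F).injective 2
  have h2F : (2 : F) = 0 := H00Aux.h2
  have hm2 : 2 ≤ m := by omega
  obtain ⟨t, ht⟩ : ∃ t, k * r = m * t + 1 := by
    refine ⟨k * r / m, ?_⟩
    have hdm := Nat.div_add_mod (k * r) m
    have hmod : k * r % m = 1 % m := hkr
    have h1m : 1 % m = 1 := Nat.mod_eq_of_lt (by omega)
    omega
  -- notation
  set tr := fun x : F => Algebra.trace (ZMod 2) F x with htr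
  -- the zero lemma
  have hzero : ∀ x : F, Algebra.trace (ZMod 2) F x = 0 → H00 k r x = 0 → x = 0 := by
    intro x hxtr hH
    by_contra hx
    unfold H00 at hH
    rw [div_eq_zero_iff] at hH
    rcases hH with hnum | hden
    · have hf : fσ k r x = 0 := pow_eq_zero_iff (by positivity) |>.mp hnum
      have hxx := H00Aux.fσ_key m t k r ht hcard x
      rw [hf] at hxx
      have hx2 : x ^ 2 + x = 0 := by
        rw [← hxx, zero_pow (by positivity), add_zero]
      have hfac : x * (x + 1) = 0 := by linear_combination hx2
      rcases mul_eq_zero.mp hfac with h | h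
      · exact hx h
      · -- x = 1
        have hx1 : x = 1 := H00Aux.add_eq_zero_iff2.mp h
        subst hx1
        have hrF : (r : F) = 0 := by rw [← H00Aux.fσ_one k r]; exact hf
        have hr2dvd : 2 ∣ r := (CharP.cast_eq_zero_iff F 2 r).mp hrF
        -- trace of 1 is m mod 2
        have hfr : Module.finrank (ZMod 2) F = m := by
          have hc := Module.card_eq_pow_finrank (K := ZMod 2) (V := F)
          rw [hcard, ZMod.card] at hc
          exact Nat.pow_right_injective (le_refl 2) hc.symm
        have htr1 : Algebra.trace (ZMod 2) F 1 = (m : ZMod 2) := by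
          have h1 : (1 : F) = algebraMap (ZMod 2) F 1 := (map_one _).symm
          rw [h1, Algebra.trace_algebraMap, hfr, nsmul_eq_mul, mul_one]
        rw [htr1] at hxtr
        have hm2dvd : 2 ∣ m := (ZMod.natCast_eq_zero_iff m 2).mp hxtr
        have hd1 : 2 ∣ k * r := hr2dvd.mul_left k
        have hd2 : 2 ∣ m * t := hm2dvd.mul_right t
        omega
    · exact hx (pow_eq_zero_iff (by norm_num) |>.mp hden)
  -- maps T0 into T0
  have hmaps0 : Set.MapsTo (H00 k r) {x : F | Algebra.trace (ZMod 2) F x = 0}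
      {x : F | Algebra.trace (ZMod 2) F x = 0} := by
    intro x hx
    simp only [Set.mem_setOf_eq] at *
    rw [H00Aux.tr_H00 m t k r ht hcard, hx, mul_zero]
  -- injectivity on T0
  have hinj0 : Set.InjOn (H00 k r) {x : F | Algebra.trace (ZMod 2) F x = 0} := by
    intro x₁ hx₁ x₂ hx₂ hHeq
    simp only [Set.mem_setOf_eq] at hx₁ hx₂
    rcases eq_or_ne x₁ 0 with rfl | hx₁0
    · exact (hzero x₂ hx₂ (by rw [← hHeq, H00Aux.H00_zero])).symm
    rcases eq_or_ne x₂ 0 with rfl | hx₂0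
    · exact hzero x₁ hx₁ (by rw [hHeq, H00Aux.H00_zero])
    obtain ⟨v₁, hv₁⟩ := H00Aux.AS_surj m t k r ht hcard x₁ hx₁
    obtain ⟨v₂, hv₂⟩ := H00Aux.AS_surj m t k r ht hcard x₂ hx₂
    have hw₁ : v₁ ^ 2 ^ k + v₁ ≠ 0 := by rw [hv₁]; exact hx₁0
    have hw₂ : v₂ ^ 2 ^ k + v₂ ≠ 0 := by rw [hv₂]; exact hx₂0
    have hφeq : (H00Aux.φf k v₁) ^ 2 + H00Aux.φf k v₁
        = (H00Aux.φf k v₂) ^ 2 + H00Aux.φf k v₂ := by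
      rw [← H00Aux.H00_AS m t k r ht hcard v₁ hw₁,
        ← H00Aux.H00_AS m t k r ht hcard v₂ hw₂, hv₁, hv₂]
      exact hHeq
    have hfac : (H00Aux.φf k v₁ + H00Aux.φf k v₂)
        * (H00Aux.φf k v₁ + H00Aux.φf k v₂ + 1) = 0 := by
      linear_combination hφeq + (H00Aux.φf k v₁ * H00Aux.φf k v₂
        + (H00Aux.φf k v₂) ^ 2 + H00Aux.φf k v₂) * h2F
    rcases mul_eq_zero.mp hfac with h | h
    · have := H00Aux.phi_inj m t k r ht hcard v₁ v₂ hw₁ hw₂ (H00Aux.add_eq_zero_iff2.mp h)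
      rw [← hv₁, ← hv₂, this]
    · have hval : (v₂ + 1) ^ 2 ^ k + (v₂ + 1) = x₂ := by
        rw [H00Aux.frob_add, one_pow]
        linear_combination hv₂ + h2F
      have hw₂' : (v₂ + 1) ^ 2 ^ k + (v₂ + 1) ≠ 0 := by rw [hval]; exact hx₂0
      have hφ' : H00Aux.φf k v₁ = H00Aux.φf k (v₂ + 1) := by
        rw [H00Aux.phi_add_one k v₂ hw₂]
        have hg : H00Aux.φf k v₁ + (H00Aux.φf k v₂ + 1) = 0 := by linear_combination h
        exact H00Aux.add_eq_zero_iff2.mp hg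
      have := H00Aux.phi_inj m t k r ht hcard v₁ (v₂ + 1) hw₁ hw₂' hφ'
      rw [← hv₁, this, hval]
  have hbij0 := (Set.Finite.injOn_iff_bijOn_of_mapsTo (Set.toFinite _) hmaps0).mp hinj0
  -- injectivity on T1
  have hinj1 : Set.InjOn (H00 k r) {x : F | Algebra.trace (ZMod 2) F x = 1} := by
    intro x₁ hx₁ x₂ hx₂ hHeq
    simp only [Set.mem_setOf_eq] at hx₁ hx₂
    by_contra hne
    have hx₁0 : x₁ ≠ 0 := by
      rintro rfl; rw [map_zero] at hx₁; exact absurd hx₁ (by decide)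
    have hx₂0 : x₂ ≠ 0 := by
      rintro rfl; rw [map_zero] at hx₂; exact absurd hx₂ (by decide)
    have hs0 : x₁ + x₂ ≠ 0 := fun h => hne (H00Aux.add_eq_zero_iff2.mp h)
    have htrs : Algebra.trace (ZMod 2) F (x₁ + x₂) = 0 := by
      rw [map_add, hx₁, hx₂]; decide
    obtain ⟨v₀, hv₀⟩ := H00Aux.AS_surj m t k r ht hcard (x₁ + x₂) htrs
    have hB₁ := H00Aux.H00_eq m t k r ht hcard x₁ hx₁0
    have hB₂ := H00Aux.H00_eq m t k r ht hcard x₂ hx₂0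
    have hfs : fσ k r x₁ + fσ k r x₂ = v₀ ^ 2 + v₀ := by
      rw [← H00Aux.fσ_add, ← hv₀, H00Aux.fσ_AS m t k r ht hcard]
    have hG : (fσ k r x₁ / x₁ + fσ k r x₂ / x₂) ^ 2 + (fσ k r x₁ / x₁ + fσ k r x₂ / x₂)
        = v₀ ^ 2 + v₀ := by
      linear_combination hfs - hB₁ + hB₂ + hHeq
        + ((fσ k r x₁ / x₁) * (fσ k r x₂ / x₂) + (fσ k r x₂ / x₂) ^ 2 + fσ k r x₂ / x₂
          - fσ k r x₁) * h2F
    have hfac : (fσ k r x₁ / x₁ + fσ k r x₂ / x₂ + v₀)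
        * (fσ k r x₁ / x₁ + fσ k r x₂ / x₂ + v₀ + 1) = 0 := by
      linear_combination hG + ((fσ k r x₁ / x₁ + fσ k r x₂ / x₂) * v₀ + v₀ ^ 2 + v₀) * h2F
    obtain ⟨v, hsv, hGv⟩ : ∃ v : F, v ^ 2 ^ k + v = x₁ + x₂
        ∧ fσ k r x₁ / x₁ + fσ k r x₂ / x₂ = v := by
      rcases mul_eq_zero.mp hfac with h | h
      · exact ⟨v₀, hv₀, H00Aux.add_eq_zero_iff2.mp h⟩
      · refine ⟨v₀ + 1, ?_, ?_⟩
        · rw [H00Aux.frob_add, one_pow]; linear_combination hv₀ + h2F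
        · have hg : fσ k r x₁ / x₁ + fσ k r x₂ / x₂ + (v₀ + 1) = 0 := by
            linear_combination h
          exact H00Aux.add_eq_zero_iff2.mp hg
    have hv0 : v ≠ 0 := by
      rintro rfl
      rw [zero_pow (by positivity), add_zero] at hsv
      exact hs0 hsv.symm
    have hfsv : fσ k r x₁ + fσ k r x₂ = v ^ 2 + v := by
      rw [← H00Aux.fσ_add, ← hsv, H00Aux.fσ_AS m t k r ht hcard]
    have hpoly : fσ k r x₁ * x₂ + fσ k r x₂ * x₁ = v * (x₁ * x₂) := by
      rw [← hGv]
      field_simp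
    have hstar : fσ k r x₁ * (x₁ + x₂) = v * x₁ ^ 2 + v * (v ^ 2 ^ k + 1) * x₁ := by
      linear_combination hpoly - (v * x₁) * hsv - x₁ * hfsv
        + (x₁ * (fσ k r x₁ - v - v * x₁)) * h2F
    set g := (x₁ ^ 2 + (v ^ 2 ^ k + 1) * x₁) / (x₁ + x₂) with hgdef
    have hsg : g * (x₁ + x₂) = x₁ ^ 2 + (v ^ 2 ^ k + 1) * x₁ := div_mul_cancel₀ _ hs0
    have hf₁g : fσ k r x₁ = v * g := by
      have h' : fσ k r x₁ * (x₁ + x₂) = (v * g) * (x₁ + x₂) := by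
        rw [mul_assoc, hsg]
        linear_combination hstar
      exact mul_right_cancel₀ hs0 h'
    have hkey := H00Aux.fσ_key m t k r ht hcard x₁
    rw [hf₁g, mul_pow] at hkey
    have hsg' : g * (v ^ 2 ^ k + v) = x₁ ^ 2 + (v ^ 2 ^ k + 1) * x₁ := by
      rw [hsv]; exact hsg
    have hAne : v ^ 2 ^ k ≠ 0 := pow_ne_zero _ hv0
    have hAg : v ^ 2 ^ k * (g ^ 2 ^ k + g + x₁) = 0 := by
      linear_combination hkey + hsg'
        + (x₁ ^ 2 + v ^ 2 ^ k * x₁ + x₁ - v * g) * h2F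
    have hgx : g ^ 2 ^ k + g + x₁ = 0 := by
      rcases mul_eq_zero.mp hAg with h | h
      · exact absurd h hAne
      · exact h
    have hx₁g : x₁ = g ^ 2 ^ k + g := by
      linear_combination (-1 : F) * hgx + x₁ * h2F
    have : (1 : ZMod 2) = 0 := by
      rw [← hx₁, hx₁g, map_add, H00Aux.tr_pow2]
      have : ∀ a : ZMod 2, a + a = 0 := by decide
      apply this
    exact absurd this (by decide)
  -- maps T1 into target
  refine ⟨hbij0, ?_⟩
  by_cases hr : r % 2 = 0
  · rw [if_pos hr]
    have hrZ : (r : ZMod 2) = 0 :=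
      (ZMod.natCast_eq_zero_iff r 2).mpr (Nat.dvd_of_mod_eq_zero hr)
    have hmaps1 : Set.MapsTo (H00 k r) {x : F | Algebra.trace (ZMod 2) F x = 1}
        {x : F | Algebra.trace (ZMod 2) F x = 0} := by
      intro x hx
      simp only [Set.mem_setOf_eq] at *
      rw [H00Aux.tr_H00 m t k r ht hcard, hx, hrZ, zero_mul]
    refine ⟨hmaps1, hinj1, ?_⟩
    have himage : (H00 k r) '' {x : F | Algebra.trace (ZMod 2) F x = 1}
        ⊆ {x : F | Algebra.trace (ZMod 2) F x = 0} := Set.MapsTo.image_subset hmaps1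
    have hcards : ({x : F | Algebra.trace (ZMod 2) F x = 0}).ncard
        ≤ ((H00 k r) '' {x : F | Algebra.trace (ZMod 2) F x = 1}).ncard := by
      rw [Set.ncard_image_of_injOn hinj1, H00Aux.T1_card]
    have heq := Set.eq_of_subset_of_ncard_le himage hcards (Set.toFinite _)
    rw [Set.SurjOn, ← heq]
  · rw [if_neg hr]
    have hrZ : (r : ZMod 2) = 1 := by
      have hr1' : r % 2 = 1 := by omega
      rw [← ZMod.natCast_mod r 2, hr1', Nat.cast_one]
    have hmaps1 : Set.MapsTo (H00 k r) {x : F | Algebra.trace (ZMod 2) F x = 1}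
        {x : F | Algebra.trace (ZMod 2) F x = 1} := by
      intro x hx
      simp only [Set.mem_setOf_eq] at *
      rw [H00Aux.tr_H00 m t k r ht hcard, hx, hrZ, one_mul]
    exact (Set.Finite.injOn_iff_bijOn_of_mapsTo (Set.toFinite _) hmaps1).mp hinj1
end

section
/- Let q = 2^m with m ≥ 2. For each b ∈ T₀* = {x ∈ F_q^* : Tr(x) = 0}, define for a ∈ T₀* the quantity p(a,b) = Σ_{τ : τ²+τ = b} (1 - (-1)^{Tr(a/τ)}). Then Σ_{a ∈ T₀*} p(a,b) = q. -/
/-!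
After swapping the sums, the outer sum runs over the roots of `τ ^ 2 + τ = b`. The additive
map `t ↦ t ^ 2 + t` has kernel `{0, 1}`, so its image has `q / 2` elements and lies in
`ker Tr`, which also has `q / 2` elements; hence `b` has exactly two roots, neither `0` nor `1`
since `b ≠ 0`. For such a root the inner sum is `2 · #{a | Tr a = 0, Tr (a / τ) = 1}`, and for
`c = τ⁻¹ ∉ {0, 1}` translation by some `u` with `Tr u = 0`, `Tr (u c) = 1` shows that exactly
half of the `q / 2` elements of `ker Tr` satisfy `Tr (a c) = 1`. The total is `2 · (q / 2) = q`.
-/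

open Finset

section TraceFibers

variable (K : Type*) {L : Type*} [Field K] [Fintype K] [Field L] [Fintype L] [Algebra K L]

theorem card_mul_card_trace_eq_zero [DecidableEq K] :
    Fintype.card K * #{x : L | Algebra.trace K L x = 0} = Fintype.card L := by
  have hfib (k : K) : #{x : L | Algebra.trace K L x = k} = #{x : L | Algebra.trace K L x = 0} :=
    AddMonoidHom.card_fiber_eq_of_mem_range (Algebra.trace K L)
      (Algebra.trace_surjective K L k) (Algebra.trace_surjective K L 0)
  calc Fintype.card K * #{x : L | Algebra.trace K L x = 0}
      = ∑ k : K, #{x : L | Algebra.trace K L x = k} := by simp [hfib]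
    _ = Fintype.card L := (card_eq_sum_card_fiberwise (fun _ _ => mem_univ _)).symm

theorem trace_pow_card (x : L) :
    Algebra.trace K L (x ^ Fintype.card K) = Algebra.trace K L x :=
  Algebra.trace_eq_of_algEquiv (FiniteField.frobeniusAlgEquivOfAlgebraic K L) x

end TraceFibers

namespace CharTwo

variable {R : Type*} [CommRing R] [CharP R 2]

def sqAddSelf : R →+ R where
  toFun t := t ^ 2 + t
  map_zero' := by simp
  map_add' s t := by rw [add_sq]; ring

@[simp]
theorem sqAddSelf_apply (t : R) : sqAddSelf t = t ^ 2 + t := rfl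

variable {F : Type*} [Field F] [CharP F 2] [Fintype F] [DecidableEq F]

omit [Fintype F] [DecidableEq F] in
theorem sq_add_self_eq_zero_iff {t : F} : t ^ 2 + t = 0 ↔ t = 0 ∨ t = 1 := by
  rw [show t ^ 2 + t = t * (t + 1) by ring, mul_eq_zero, CharTwo.add_eq_zero]

theorem card_sq_add_self_eq {b : F} (hb : b ∈ Set.range (sqAddSelf : F →+ F)) :
    #{t : F | t ^ 2 + t = b} = 2 := by
  have hker : ({t : F | sqAddSelf t = 0} : Finset F) = {0, 1} := by
    ext t; simp [sq_add_self_eq_zero_iff]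
  calc #{t : F | t ^ 2 + t = b} = #{t : F | sqAddSelf t = 0} :=
        AddMonoidHom.card_fiber_eq_of_mem_range _ hb ⟨0, map_zero _⟩
    _ = 2 := by rw [hker, card_pair zero_ne_one]

theorem two_mul_card_image_sq_add_self :
    2 * #(univ.image fun t : F => t ^ 2 + t) = Fintype.card F := by
  calc 2 * #(univ.image fun t : F => t ^ 2 + t)
      = ∑ b ∈ univ.image (fun t : F => t ^ 2 + t), #{t : F | t ^ 2 + t = b} := by
        rw [sum_congr rfl fun b hb => card_sq_add_self_eq (by simpa using hb), sum_const, smul_eq_mul,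
          mul_comm]
    _ = Fintype.card F := (card_eq_sum_card_image _ _).symm

end CharTwo

theorem ZMod.ne_zero_iff_eq_one {x : ZMod 2} : x ≠ 0 ↔ x = 1 := by
  revert x; decide

theorem charP_two_of_algebra_zmod_two {A : Type*} [Ring A] [Nontrivial A] [Algebra (ZMod 2) A] :
    CharP A 2 :=
  charP_of_injective_algebraMap' (ZMod 2) 2

section TraceZModTwo

variable {F : Type*} [Field F] [Fintype F] [Algebra (ZMod 2) F]

local notation "Tr" => Algebra.trace (ZMod 2) F

attribute [local instance] charP_two_of_algebra_zmod_two

theorem trace_sq_add_self (t : F) : Tr (t ^ 2 + t) = 0 := by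
  have h := trace_pow_card (ZMod 2) t
  rw [ZMod.card] at h
  rw [map_add, h, CharTwo.add_self_eq_zero]

theorem exists_trace_eq_zero_and_trace_mul_eq_one {c : F} (hc0 : c ≠ 0) (hc1 : c ≠ 1) :
    ∃ u : F, Tr u = 0 ∧ Tr (u * c) = 1 := by
  obtain ⟨w, hw⟩ := Algebra.trace_surjective (ZMod 2) F 1
  have hc1' : c + 1 ≠ 0 := fun h => hc1 (CharTwo.add_eq_zero.mp h)
  have hx : Tr (w / c * c) = 1 := by rw [div_mul_cancel₀ w hc0, hw]
  have hy : Tr (w / (c + 1) * c) + Tr (w / (c + 1)) = 1 := by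
    rw [← map_add, ← mul_add_one, div_mul_cancel₀ w hc1', hw]
  -- By `hx` and `hy`, one of `w / c`, `w / (c + 1)` and their sum is a witness.
  have key : ∀ α β γ : ZMod 2, γ + β = 1 →
      α = 0 ∨ (β = 0 ∧ γ = 1) ∨ (α + β = 0 ∧ 1 + γ = 1) := by decide
  rcases key (Tr (w / c)) (Tr (w / (c + 1))) _ hy with h | h | h
  · exact ⟨w / c, h, hx⟩
  · exact ⟨w / (c + 1), h⟩
  · exact ⟨w / c + w / (c + 1), by rw [map_add, h.1], by rw [add_mul, map_add, hx, h.2]⟩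

theorem two_mul_card_trace_eq_zero_and_trace_mul_eq_one {c : F} (hc0 : c ≠ 0) (hc1 : c ≠ 1) :
    2 * #{a : F | Tr a = 0 ∧ Tr (a * c) = 1} = #{a : F | Tr a = 0} := by
  let φ : F →+ ZMod 2 × ZMod 2 :=
    AddMonoidHom.mk' (fun a => (Tr a, Tr (a * c))) fun a b => by simp [add_mul]
  obtain ⟨u, hu⟩ := exists_trace_eq_zero_and_trace_mul_eq_one hc0 hc1
  have hfib : #{a | φ a = (0, 1)} = #{a | φ a = (0, 0)} :=
    AddMonoidHom.card_fiber_eq_of_mem_range φ ⟨u, Prod.ext hu.1 hu.2⟩ ⟨0, map_zero φ⟩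
  simp only [φ, AddMonoidHom.mk'_apply, Prod.mk.injEq] at hfib
  have hsplit := card_filter_add_card_filter_not (s := {a : F | Tr a = 0})
    fun a => Tr (a * c) = 0
  simp only [filter_filter, ZMod.ne_zero_iff_eq_one] at hsplit
  omega

theorem exists_sq_add_self_eq_of_trace_eq_zero {b : F} (hb : Tr b = 0) :
    ∃ t : F, t ^ 2 + t = b := by
  classical
  have hsub : univ.image (fun t : F => t ^ 2 + t) ⊆ ({x : F | Tr x = 0} : Finset F) := by
    simp [subset_iff, trace_sq_add_self]
  have hcard : #{x : F | Tr x = 0} ≤ #(univ.image fun t : F => t ^ 2 + t) := by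
    have h₁ := card_mul_card_trace_eq_zero (ZMod 2) (L := F)
    have h₂ := CharTwo.two_mul_card_image_sq_add_self (F := F)
    rw [ZMod.card] at h₁
    omega
  have hmem : b ∈ univ.image (fun t : F => t ^ 2 + t) := by
    rw [eq_of_subset_of_card_le hsub hcard]
    simpa using hb
  simpa using hmem

theorem card_sq_add_self_eq_of_trace_eq_zero [DecidableEq F] {b : F} (hb : Tr b = 0) :
    #{t : F | t ^ 2 + t = b} = 2 :=
  CharTwo.card_sq_add_self_eq (exists_sq_add_self_eq_of_trace_eq_zero hb)

theorem sum_one_sub_sign_trace_div [DecidableEq F] {τ : F} (hτ0 : τ ≠ 0) (hτ1 : τ ≠ 1) :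
    ∑ a ∈ univ.filter (fun a : F => a ≠ 0 ∧ Tr a = 0),
      (1 - (if Tr (a / τ) = 0 then (1 : ℤ) else -1)) = #{a : F | Tr a = 0} := by
  have hfilter : (univ.filter fun a : F => a ≠ 0 ∧ Tr a = 0).filter (fun a => ¬Tr (a / τ) = 0) =
      univ.filter fun a : F => Tr a = 0 ∧ Tr (a * τ⁻¹) = 1 := by
    ext a
    simp only [mem_filter, mem_univ, true_and, div_eq_mul_inv, ← ZMod.ne_zero_iff_eq_one]
    constructor
    · rintro ⟨⟨-, ha⟩, haτ⟩
      exact ⟨ha, haτ⟩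
    · rintro ⟨ha, haτ⟩
      refine ⟨⟨?_, ha⟩, haτ⟩
      rintro rfl
      simp at haτ
  calc ∑ a ∈ univ.filter (fun a : F => a ≠ 0 ∧ Tr a = 0),
        (1 - (if Tr (a / τ) = 0 then (1 : ℤ) else -1))
      = ∑ a ∈ univ.filter (fun a : F => a ≠ 0 ∧ Tr a = 0),
          if Tr (a / τ) = 0 then (0 : ℤ) else 2 :=
        sum_congr rfl fun a _ => by split_ifs <;> norm_num
    _ = 2 * #{a : F | Tr a = 0 ∧ Tr (a * τ⁻¹) = 1} := by
        rw [sum_ite, sum_const_zero, zero_add, sum_const, hfilter, nsmul_eq_mul, mul_comm]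
    _ = #{a : F | Tr a = 0} := by
        exact_mod_cast two_mul_card_trace_eq_zero_and_trace_mul_eq_one (inv_ne_zero hτ0)
          (inv_ne_one.mpr hτ1)

end TraceZModTwo

theorem sum_p_ab_eq_q_general (m : ℕ)
    (F : Type*) [Field F] [Fintype F] [DecidableEq F] [Algebra (ZMod 2) F]
    (hcard : Fintype.card F = 2 ^ m) (b : F) (hb0 : b ≠ 0)
    (hbt : Algebra.trace (ZMod 2) F b = 0) :
    ∑ a ∈ Finset.univ.filter (fun a : F => a ≠ 0 ∧ Algebra.trace (ZMod 2) F a = 0),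
      ∑ τ ∈ Finset.univ.filter (fun τ : F => τ ^ 2 + τ = b),
        (1 - (if Algebra.trace (ZMod 2) F (a / τ) = 0 then (1 : ℤ) else -1)) = 2 ^ m := by
  have : CharP F 2 := charP_two_of_algebra_zmod_two
  have hroot {τ : F} (hτ : τ ^ 2 + τ = b) : τ ≠ 0 ∧ τ ≠ 1 :=
    not_or.mp fun h => hb0 (hτ ▸ CharTwo.sq_add_self_eq_zero_iff.mpr h)
  rw [sum_comm]
  calc _ = ∑ τ ∈ univ.filter (fun τ : F => τ ^ 2 + τ = b),
        (#{a : F | Algebra.trace (ZMod 2) F a = 0} : ℤ) :=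
        sum_congr rfl fun τ hτ =>
          sum_one_sub_sign_trace_div (hroot (mem_filter.mp hτ).2).1 (hroot (mem_filter.mp hτ).2).2
    _ = 2 * #{a : F | Algebra.trace (ZMod 2) F a = 0} := by
        rw [sum_const, card_sq_add_self_eq_of_trace_eq_zero hbt, nsmul_eq_mul, Nat.cast_ofNat]
    _ = 2 ^ m := by
        have h := card_mul_card_trace_eq_zero (ZMod 2) (L := F)
        rw [ZMod.card, hcard] at h
        exact_mod_cast h

/-- For `q = 2^m`, `m ≥ 2`, and `b ∈ T₀*`, with
`p(a,b) = Σ_{τ : τ²+τ=b} (1 - (-1)^{Tr(a/τ)})`, one has `Σ_{a ∈ T₀*} p(a,b) = q`. -/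
theorem sum_p_ab_eq_q (m : ℕ) (hm : 2 ≤ m)
    (F : Type*) [Field F] [Fintype F] [DecidableEq F] [Algebra (ZMod 2) F]
    (hcard : Fintype.card F = 2 ^ m) (b : F) (hb0 : b ≠ 0)
    (hbt : Algebra.trace (ZMod 2) F b = 0) :
    ∑ a ∈ Finset.univ.filter (fun a : F => a ≠ 0 ∧ Algebra.trace (ZMod 2) F a = 0),
      ∑ τ ∈ Finset.univ.filter (fun τ : F => τ ^ 2 + τ = b),
        (1 - (if Algebra.trace (ZMod 2) F (a / τ) = 0 then (1 : ℤ) else -1)) = 2 ^ m :=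
  sum_p_ab_eq_q_general m F hcard b hb0 hbt
end

section
/- Let q = 2^m with m odd and let b ∈ F_q^* with Tr(b) = 0. Write b = β + β² with Tr(β) = 0. Then for every x ∈ F_q^* and the unique trace-zero solution c of c^σ + c = (β+τ)+(β+τ)², where τ satisfies x = b/τ², one has: if r is even then Tr(b·f(τ+β)/τ²) = Tr(β²·H₀₀(x)), where σ = 2^k, gcd(k,m)=1, kr ≡ 1 (mod m), f(y) = Σ_{i=0}^{r-1} y^{σ^i}, and H₀₀(x) = f(x)^{σ+1}/x². -/
/-- Let `q = 2^m` with `m` odd, `gcd(k,m) = 1`, `σ = 2^k`, `kr ≡ 1 (mod m)` with `r` even,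
and `b ∈ F_q^*` with `Tr(b) = 0`, written as `b = β + β²` with `Tr(β) = 0`. Then for every
`τ ∈ F_q^*` (with `x = b/τ²`), `Tr(b·f(τ+β)/τ²) = Tr(β²·H₀₀(x))`. -/
theorem trace_identity_r_even (m k r : ℕ) (hm : Odd m) (hk1 : 1 ≤ k) (hk2 : k ≤ m - 1)
    (hgcd : Nat.gcd k m = 1) (hr1 : 1 ≤ r) (hr2 : r ≤ m - 1) (hkr : k * r ≡ 1 [MOD m])
    (hre : r % 2 = 0)
    (F : Type*) [Field F] [Fintype F] [Algebra (ZMod 2) F] (hcard : Fintype.card F = 2 ^ m)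
    (b β : F) (hb0 : b ≠ 0) (hbt : Algebra.trace (ZMod 2) F b = 0)
    (hβt : Algebra.trace (ZMod 2) F β = 0) (hbβ : b = β + β ^ 2)
    (τ : F) (hτ : τ ≠ 0) :
    Algebra.trace (ZMod 2) F (b * fσ k r (τ + β) / τ ^ 2) =
      Algebra.trace (ZMod 2) F (β ^ 2 * H00 k r (b / τ ^ 2)) := by
  have hinj : Function.Injective (algebraMap (ZMod 2) F) := (algebraMap (ZMod 2) F).injective
  haveI : CharP F 2 := charP_of_injective_algebraMap hinj 2
  haveI : FiniteDimensional (ZMod 2) F := Module.Finite.of_finite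
  set T := Algebra.trace (ZMod 2) F with hTdef
  -- trace is invariant under squaring
  have hTsq : ∀ z : F, T (z ^ 2) = T z := by
    intro z
    apply hinj
    rw [hTdef, trace_eq_sum_automorphisms, trace_eq_sum_automorphisms]
    simp_rw [map_pow]
    rw [← sum_pow_char (R := F) 2, ← trace_eq_sum_automorphisms, ← map_pow]
    congr 1
    generalize Algebra.trace (ZMod 2) F z = t
    revert t; decide
  have hTpow : ∀ (n : ℕ) (z : F), T (z ^ 2 ^ n) = T z := by
    intro n
    induction n with
    | zero => simp
    | succ n ih => intro z; rw [pow_succ, pow_mul, hTsq, ih]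
  -- 2^(k*r)-th power is squaring
  have hm2 : 2 ≤ m := by omega
  obtain ⟨t, ht⟩ : ∃ t, k * r = m * t + 1 := by
    have hpos : 1 ≤ k * r := Nat.one_le_iff_ne_zero.mpr (by positivity)
    obtain ⟨t, ht⟩ := (Nat.modEq_iff_dvd' hpos).mp hkr.symm
    exact ⟨t, (Nat.sub_eq_iff_eq_add hpos).mp ht⟩
  have hq : ∀ z : F, z ^ 2 ^ (k * r) = z ^ 2 := by
    intro z
    rw [ht, pow_succ, pow_mul, pow_mul, ← hcard, FiniteField.pow_card_pow]
  -- Frobenius acting on fσ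
  have hfrob : ∀ x : F, fσ k r x ^ 2 ^ k = fσ k r x + x ^ 2 + x := by
    intro x
    have h1 : fσ k r x ^ 2 ^ k = ∑ i ∈ Finset.range r, x ^ 2 ^ (k * (i + 1)) := by
      rw [fσ, sum_pow_char_pow]
      refine Finset.sum_congr rfl fun i _ => ?_
      rw [← pow_mul, ← pow_add]
      ring_nf
    have h2 : (∑ i ∈ Finset.range r, x ^ 2 ^ (k * (i + 1))) + x ^ 2 ^ (k * 0) =
        (∑ i ∈ Finset.range r, x ^ 2 ^ (k * i)) + x ^ 2 ^ (k * r) := by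
      rw [← Finset.sum_range_succ' (fun i => x ^ 2 ^ (k * i)) r, Finset.sum_range_succ]
    rw [h1]
    have := h2
    rw [Nat.mul_zero, pow_zero, pow_one, hq] at this
    have hx : (∑ i ∈ Finset.range r, x ^ 2 ^ (k * (i + 1))) =
        (∑ i ∈ Finset.range r, x ^ 2 ^ (k * i)) + x ^ 2 + x := by
      rw [eq_sub_of_add_eq this, CharTwo.sub_eq_add]
    rw [hx, fσ]
  -- adjoint identity: T (fσ x * y²) + T (x*y) = T (x * fσ y) + T (x*y²)
  have hadj : ∀ x y : F, T (fσ k r x * y ^ 2) + T (x * y) =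
      T (x * fσ k r y) + T (x * y ^ 2) := by
    intro x y
    set G : ℕ → ZMod 2 := fun j => T (x * y ^ 2 ^ (k * j)) with hG
    have hterm : ∀ i ∈ Finset.range r, T (x ^ 2 ^ (k * i) * y ^ 2) = G (r - i) := by
      intro i hi
      have hi' : i < r := Finset.mem_range.mp hi
      have hpow : (x * y ^ 2 ^ (k * (r - i))) ^ 2 ^ (k * i) = x ^ 2 ^ (k * i) * y ^ 2 := by
        rw [mul_pow, ← pow_mul, ← pow_add, ← Nat.mul_add]
        rw [Nat.sub_add_cancel hi'.le, hq]
      rw [hG]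
      simp only
      rw [← hTpow (k * i) (x * y ^ 2 ^ (k * (r - i))), hpow]
    have h1 : T (fσ k r x * y ^ 2) = ∑ i ∈ Finset.range r, G (r - i) := by
      rw [fσ, Finset.sum_mul, map_sum]
      exact Finset.sum_congr rfl hterm
    have h2 : ∑ i ∈ Finset.range r, G (r - i) = ∑ i ∈ Finset.range r, G (i + 1) := by
      rw [← Finset.sum_range_reflect (fun j => G (j + 1)) r]
      refine Finset.sum_congr rfl fun j hj => ?_
      have := Finset.mem_range.mp hj
      congr 1
      omega
    have h3 : (∑ i ∈ Finset.range r, G (i + 1)) + G 0 =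
        (∑ i ∈ Finset.range r, G i) + G r := by
      rw [← Finset.sum_range_succ' G r, Finset.sum_range_succ]
    have h4 : ∑ i ∈ Finset.range r, G i = T (x * fσ k r y) := by
      rw [fσ, Finset.mul_sum, map_sum]
    have h5 : G r = T (x * y ^ 2) := by rw [hG]; simp only [hq]
    have h6 : G 0 = T (x * y) := by rw [hG]; simp
    rw [h1, h2, ← h6, h3, h4, h5]
  -- setup x
  set x := b / τ ^ 2 with hxdef
  have hτ2 : τ ^ 2 ≠ 0 := pow_ne_zero 2 hτ
  have hx0 : x ≠ 0 := div_ne_zero hb0 hτ2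
  have hxτ : x * τ ^ 2 = b := div_mul_cancel₀ b hτ2
  have htwo : (2 : F) = 0 := by
    have := CharP.cast_eq_zero F 2
    exact_mod_cast this
  -- LHS
  have hL : b * fσ k r (τ + β) / τ ^ 2 = x * fσ k r (τ + β) := by
    rw [hxdef, mul_div_right_comm]
  -- RHS chain
  set s := fσ k r x with hs
  have hH : β ^ 2 * H00 k r x =
      (β * s / x) ^ 2 + β ^ 2 * s + β ^ 2 * (s / x) := by
    have hps : fσ k r x ^ (2 ^ k + 1) = fσ k r x ^ 2 ^ k * fσ k r x := pow_succ _ _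
    rw [H00, hps, hfrob, ← hs]
    field_simp
  have hR1 : T (β ^ 2 * H00 k r x) = T (β * s / x) + T (β ^ 2 * s) + T (β ^ 2 * (s / x)) := by
    rw [hH, map_add, map_add, hTsq]
  have hcomb : β * s / x + β ^ 2 * (s / x) = τ ^ 2 * s := by
    have hb' : b * s / x = τ ^ 2 * s := by
      rw [← hxτ]; field_simp
    rw [← hb', hbβ]; field_simp
  have hR2 : T (β ^ 2 * H00 k r x) = T (s * (τ + β) ^ 2) := by
    have e : s * (τ + β) ^ 2 = (β * s / x + β ^ 2 * (s / x)) + β ^ 2 * s := by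
      rw [hcomb, CharTwo.add_sq]
      ring
    rw [hR1, e, map_add, map_add]
    generalize T (β * s / x) = A
    generalize T (β ^ 2 * s) = B
    generalize T (β ^ 2 * (s / x)) = C
    revert A B C; decide
  -- key vanishing
  have hkey : T (x * (τ + β)) + T (x * (τ + β) ^ 2) = 0 := by
    have e : x * (τ + β) + x * (τ + β) ^ 2 = (x * τ + (x * τ) ^ 2) + b := by
      linear_combination (1 - x) * hxτ - x * hbβ + (x * τ * β) * htwo
    rw [← map_add, e, map_add, map_add, hTsq, hbt]
    generalize T (x * τ) = A
    revert A; decide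
  -- assemble
  rw [hL, hR2]
  have hadj' := hadj x (τ + β)
  rw [mul_comm (fσ k r x) ((τ + β) ^ 2), ← hs] at hadj'
  rw [show s * (τ + β) ^ 2 = (τ + β) ^ 2 * s from mul_comm _ _]
  generalize hA : T (x * fσ k r (τ + β)) = A at *
  generalize hB : T ((τ + β) ^ 2 * s) = B at *
  generalize hC : T (x * (τ + β)) = C at *
  generalize hD : T (x * (τ + β) ^ 2) = D at *
  clear hA hB hC hD
  revert hadj' hkey
  revert A B C D
  decide
end
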